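/- Let p be a prime, n a positive integer, and 1 ≤ m ≤ n. A function f : 𝔽_p^n → 𝔽_p is m-resilient if and only if the polynomial z^{p^m} − 1 divides the associated polynomial F_π(z) in ℂ[z] for every permutation π of {1,...,n}. -/

import Mathlib

/-- `ω = exp(2π√-1/p)`, a primitive `p`-th root of unity in `ℂ`. -/
noncomputable def omegaC (p : ℕ) : ℂ := Complex.exp (2 * Real.pi * Complex.I / p)

/-- `ξ = exp(2π√-1/pⁿ)`, a primitive `pⁿ`-th root of unity in `ℂ`. -/
noncomputable def xiC (p n : ℕ) : ℂ := Complex.exp (2 * Real.pi * Complex.I / (p ^ n : ℕ))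

/-- The integer `k = Σ_{i=1}^n x_i p^{i-1}` whose `p`-adic digits are `x₁,…,xₙ`
(0-indexed here). -/
def idx {p n : ℕ} (x : Fin n → ZMod p) : ℕ := ∑ i : Fin n, (x i).val * p ^ (i : ℕ)

/-- The associated polynomial `F(z) = Σ_{k=0}^{pⁿ-1} ω^{f(k)} z^k
  = Σ_{x ∈ 𝔽ₚⁿ} ω^{f(x)} z^{idx x} ∈ ℂ[z]`. -/
noncomputable def assocPoly {p n : ℕ} [NeZero p] (f : (Fin n → ZMod p) → ZMod p) :
    Polynomial ℂ :=
  ∑ x : Fin n → ZMod p, Polynomial.monomial (idx x) (omegaC p ^ (f x).val)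

/-- Discrete Fourier transform over ℂ: `𝔉_f(j) = Σ_{k=0}^{pⁿ-1} ω^{f(k)} ξ^{-kj}`. -/
noncomputable def dft {p n : ℕ} [NeZero p] (f : (Fin n → ZMod p) → ZMod p) (j : ℕ) : ℂ :=
  ∑ x : Fin n → ZMod p, omegaC p ^ (f x).val * xiC p n ^ (-((idx x * j : ℕ) : ℤ))

/-- `f` is `m`-th order correlation-immune: for every `m`-subset `S` of the variable
indices, every assignment `a` of values on `S` and every `t`,
`p^m ⬝ #{x : f x = t ∧ x∣_S = a∣_S} = #{x : f x = t}`. -/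
def CorrImmune {p n : ℕ} [NeZero p] (f : (Fin n → ZMod p) → ZMod p) (m : ℕ) : Prop :=
  ∀ S : Finset (Fin n), S.card = m → ∀ a : Fin n → ZMod p, ∀ t : ZMod p,
    p ^ m * (Finset.univ.filter fun x : Fin n → ZMod p =>
        f x = t ∧ ∀ i ∈ S, x i = a i).card
      = (Finset.univ.filter fun x : Fin n → ZMod p => f x = t).card

/-- `f` is balanced: every output value is attained exactly `p^{n-1}` times. -/
def IsBalanced {p n : ℕ} [NeZero p] (f : (Fin n → ZMod p) → ZMod p) : Prop :=
  ∀ t : ZMod p,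
    (Finset.univ.filter fun x : Fin n → ZMod p => f x = t).card = p ^ (n - 1)

/-- `f` is `m`-resilient: `m`-th order correlation-immune and balanced. -/
def Resilient {p n : ℕ} [NeZero p] (f : (Fin n → ZMod p) → ZMod p) (m : ℕ) : Prop :=
  CorrImmune f m ∧ IsBalanced f


/-!
Reducing modulo `X ^ p ^ m - 1` replaces the exponent `idx x` by `idx x % p ^ m`, which records
exactly the first `m` digits of `x`. So `X ^ p ^ m - 1 ∣ F` iff, for every assignment `a` of the
first `m` coordinates, the sum of `ω ^ f x` over the subcube `x_{<m} = a` vanishes. As the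
cyclotomic polynomial `1 + X + ⋯ + X ^ (p - 1)` is the minimal polynomial of `ω` over `ℚ`, a sum
`∑ c_t ω ^ t` with rational `c_t` vanishes iff all `c_t` are equal, i.e. iff `f` takes every value
equally often on that subcube. Permuting the variables moves the first `m` coordinates onto an
arbitrary `m`-set, and a double count shows that `f` is balanced on all subcubes of codimension
`m` iff it is `m`-resilient.
-/

open Finset Polynomial

lemma pow_sub_one_dvd_pow_sub_pow_mod {R : Type*} [CommRing R] (x : R) (N k : ℕ) :
    x ^ N - 1 ∣ x ^ k - x ^ (k % N) := by
  have h : x ^ k - x ^ (k % N) = x ^ (k % N) * ((x ^ N) ^ (k / N) - 1) := by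
    rw [mul_sub, mul_one, ← pow_mul, ← pow_add, Nat.mod_add_div]
  exact h ▸ dvd_mul_of_dvd_right (sub_one_dvd_pow_sub_one _ _) _

namespace Polynomial

variable {R ι : Type*} [CommRing R]

lemma coeff_sum_monomial (s : Finset ι) (k : ι → ℕ) (c : ι → R) (r : ℕ) :
    (∑ i ∈ s, monomial (k i) (c i)).coeff r = ∑ i ∈ s with k i = r, c i := by
  simp only [finsetSum_coeff, coeff_monomial, sum_filter]

theorem X_pow_sub_one_dvd_sum_monomial_iff [Nontrivial R] {N : ℕ} (hN : N ≠ 0)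
    (s : Finset ι) (k : ι → ℕ) (c : ι → R) :
    X ^ N - 1 ∣ ∑ i ∈ s, monomial (k i) (c i) ↔ ∀ r, ∑ i ∈ s with k i % N = r, c i = 0 := by
  have hmonic : (X ^ N - 1 : R[X]).Monic := by simpa using monic_X_pow_sub_C (1 : R) hN
  set G := ∑ i ∈ s, monomial (k i % N) (c i)
  have hdvd : X ^ N - 1 ∣ ∑ i ∈ s, monomial (k i) (c i) - G := by
    rw [← sum_sub_distrib]
    refine dvd_sum fun i _ => ?_
    rw [← C_mul_X_pow_eq_monomial, ← C_mul_X_pow_eq_monomial, ← mul_sub]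
    exact dvd_mul_of_dvd_right (pow_sub_one_dvd_pow_sub_pow_mod X N (k i)) _
  have hdeg : G.degree < (X ^ N - 1 : R[X]).degree := by
    rw [← C_1, degree_X_pow_sub_C (Nat.pos_of_ne_zero hN), degree_lt_iff_coeff_zero]
    intro r hr
    rw [coeff_sum_monomial, filter_false_of_mem fun i _ => ?_, sum_empty]
    exact ((Nat.mod_lt _ (Nat.pos_of_ne_zero hN)).trans_le hr).ne
  rw [← modByMonic_eq_zero_iff_dvd hmonic, modByMonic_eq_of_dvd_sub hmonic hdvd,
    (modByMonic_eq_self_iff hmonic).2 hdeg, Polynomial.ext_iff]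
  simp only [G, coeff_sum_monomial, coeff_zero]

end Polynomial

theorem IsPrimitiveRoot.sum_smul_pow_val_eq_zero_iff {K : Type*} [Field K] [CharZero K]
    {p : ℕ} [hp : Fact p.Prime] {ζ : K} (hζ : IsPrimitiveRoot ζ p) (c : ZMod p → ℚ) :
    ∑ t : ZMod p, c t • ζ ^ t.val = 0 ↔ ∀ t t', c t = c t' := by
  constructor
  · intro h
    set Q : ℚ[X] := ∑ t : ZMod p, monomial t.val (c t)
    have hQ : aeval ζ Q = 0 := by
      simpa [Q, aeval_monomial, Algebra.smul_def] using h
    obtain ⟨q, hq⟩ : cyclotomic p ℚ ∣ Q :=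
      cyclotomic_eq_minpoly_rat hζ hp.out.pos ▸ minpoly.dvd ℚ ζ hQ
    have hq0 : q.natDegree = 0 := by
      rcases eq_or_ne q 0 with rfl | hq0
      · rfl
      have hdeg : Q.natDegree ≤ p - 1 :=
        natDegree_sum_le_of_forall_le _ _ fun t _ =>
          (natDegree_monomial_le _).trans (Nat.le_sub_one_of_lt t.val_lt)
      rw [hq, natDegree_mul (cyclotomic_ne_zero p ℚ) hq0, natDegree_cyclotomic,
        Nat.totient_prime hp.out] at hdeg
      omega
    have hcoeff : ∀ t, c t = q.coeff 0 := by
      intro t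
      have hQt : Q.coeff t.val = c t := by
        simp only [Q, coeff_sum_monomial, (ZMod.val_injective p).eq_iff, filter_eq', mem_univ,
          if_true, sum_singleton]
      rw [← hQt, hq, eq_C_of_natDegree_eq_zero hq0, coeff_mul_C, cyclotomic_prime,
        finsetSum_coeff]
      simp [coeff_X_pow, t.val_lt]
    intro t t'
    rw [hcoeff t, hcoeff t']
  · intro h
    have sum_pow_val : ∑ t : ZMod p, ζ ^ t.val = 0 := by
      rw [← hζ.geom_sum_eq_zero hp.out.one_lt]
      exact sum_nbij' ZMod.val Nat.cast (fun t _ => mem_range.2 t.val_lt) (fun _ _ => mem_univ _)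
        (fun t _ => ZMod.natCast_zmod_val t) (fun i hi => ZMod.val_cast_of_lt (mem_range.1 hi))
        (fun _ _ => rfl)
    simp_rw [h _ 0, ← smul_sum, sum_pow_val, smul_zero]

section Balanced

variable {γ β : Type*} [Fintype β] [DecidableEq β]

def BalancedOn (f : γ → β) (s : Finset γ) : Prop :=
  ∀ t t', #{x ∈ s | f x = t} = #{x ∈ s | f x = t'}

lemma BalancedOn.card_mul_card_filter {f : γ → β} {s : Finset γ} (h : BalancedOn f s) (t : β) :
    Fintype.card β * #{x ∈ s | f x = t} = #s := by
  calc Fintype.card β * #{x ∈ s | f x = t} = ∑ _t' : β, #{x ∈ s | f x = t} := by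
        rw [sum_const, card_univ, smul_eq_mul]
    _ = ∑ t', #{x ∈ s | f x = t'} := sum_congr rfl fun t' _ => h t t'
    _ = #s := (card_eq_sum_card_fiberwise fun x _ => mem_univ (f x)).symm

lemma sum_comp_eq_sum_card_filter_smul {M : Type*} [AddCommMonoid M] (f : γ → β)
    (s : Finset γ) (F : β → M) :
    ∑ x ∈ s, F (f x) = ∑ t, #{x ∈ s | f x = t} • F t := by
  rw [← sum_fiberwise s f]
  refine sum_congr rfl fun t _ => ?_
  rw [sum_congr rfl fun x hx => congrArg F (mem_filter.1 hx).2, sum_const]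

end Balanced

section Cylinder

variable {ι α : Type*} [Fintype ι] [DecidableEq ι] [Fintype α] [DecidableEq α]

def cylinder (S : Finset ι) (a : ι → α) : Finset (ι → α) :=
  {x | ∀ i ∈ S, x i = a i}

@[simp]
lemma mem_cylinder {S : Finset ι} {a x : ι → α} : x ∈ cylinder S a ↔ ∀ i ∈ S, x i = a i := by
  simp [cylinder]

lemma card_cylinder (S : Finset ι) (a : ι → α) :
    #(cylinder S a) = Fintype.card α ^ (Fintype.card ι - #S) := by
  have : cylinder S a = Fintype.piFinset fun i => if i ∈ S then {a i} else univ := by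
    ext x
    simp only [mem_cylinder, Fintype.mem_piFinset]
    refine forall_congr' fun i => ?_
    split_ifs with hi <;> simp [hi]
  simp only [this, Fintype.card_piFinset, apply_ite card, card_singleton, card_univ, prod_ite,
    prod_const_one, one_mul, prod_const, filter_not, filter_mem_eq_inter, univ_inter]
  rw [card_univ_sdiff]

lemma sum_card_filter_cylinder {β : Type*} [DecidableEq β] (f : (ι → α) → β) (S : Finset ι)
    (t : β) :
    ∑ a, #{x ∈ cylinder S a | f x = t} =
      #{x | f x = t} * Fintype.card α ^ (Fintype.card ι - #S) := by
  have h := sum_card_bipartiteAbove_eq_sum_card_bipartiteBelow (s := univ) (t := {x | f x = t})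
    (r := fun (a x : ι → α) => ∀ i ∈ S, x i = a i)
  simp only [bipartiteAbove, bipartiteBelow, filter_filter] at h
  simp only [cylinder, filter_filter, and_comm (a := ∀ i ∈ S, _)]
  refine h.trans (sum_const_nat fun x _ => ?_)
  simp_rw [eq_comm (a := x _)]
  exact card_cylinder S x

lemma sum_cylinder_comp_perm {M : Type*} [AddCommMonoid M] (S : Finset ι) (a : ι → α)
    (π : Equiv.Perm ι) (F : (ι → α) → M) :
    ∑ x ∈ cylinder S a, F (x ∘ π) = ∑ y ∈ cylinder (S.map π.symm.toEmbedding) (a ∘ π), F y := by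
  refine sum_equiv (π.symm.arrowCongr (Equiv.refl α)) (fun x => ?_) fun x _ => rfl
  simpa using π.symm.forall_congr_left (p := fun i => i ∈ S → x i = a i)

end Cylinder

section Digits

variable {p : ℕ}

lemma idx_eq_add_pow_mul {m k : ℕ} (x : Fin (m + k) → ZMod p) :
    idx x = idx (x ∘ Fin.castAdd k) + p ^ m * idx (x ∘ Fin.natAdd m) := by
  simp only [idx, Fin.sum_univ_add, mul_sum, Function.comp_apply, Fin.val_castAdd,
    Fin.val_natAdd, pow_add]
  congr 1
  exact sum_congr rfl fun _ _ => by ring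

variable [NeZero p]

lemma idx_eq_finFunctionFinEquiv {n : ℕ} (x : Fin n → ZMod p) :
    idx x = finFunctionFinEquiv fun i => (⟨(x i).val, (x i).val_lt⟩ : Fin p) := by
  rw [finFunctionFinEquiv_apply, idx]

lemma idx_lt {n : ℕ} (x : Fin n → ZMod p) : idx x < p ^ n :=
  idx_eq_finFunctionFinEquiv x ▸ Fin.isLt _

lemma idx_injective {n : ℕ} : Function.Injective (idx : (Fin n → ZMod p) → ℕ) := by
  intro x y h
  rw [idx_eq_finFunctionFinEquiv, idx_eq_finFunctionFinEquiv] at h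
  funext i
  exact ZMod.val_injective p (Fin.ext_iff.1 (congrFun (finFunctionFinEquiv.injective
    (Fin.ext h)) i))

lemma idx_mod_pow {n m : ℕ} (hmn : m ≤ n) (x : Fin n → ZMod p) :
    idx x % p ^ m = idx (x ∘ Fin.castLE hmn) := by
  obtain ⟨k, rfl⟩ := Nat.exists_eq_add_of_le hmn
  rw [idx_eq_add_pow_mul, Nat.add_mul_mod_self_left, Nat.mod_eq_of_lt (idx_lt _)]
  rfl

lemma filter_idx_mod_pow_eq {n m : ℕ} (hmn : m ≤ n) (a : Fin n → ZMod p) :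
    univ.filter (fun x => idx x % p ^ m = idx a % p ^ m) =
      cylinder (univ.map (Fin.castLEEmb hmn)) a := by
  ext x
  simp [idx_mod_pow hmn, idx_injective.eq_iff, funext_iff]

end Digits

lemma omegaC_isPrimitiveRoot (p : ℕ) [NeZero p] : IsPrimitiveRoot (omegaC p) p :=
  Complex.isPrimitiveRoot_exp p (NeZero.ne p)

section AssocPoly

variable {p n m : ℕ}

lemma sum_omegaC_pow_val_eq_zero_iff {γ : Type*} [Fact p.Prime] (f : γ → ZMod p)
    (s : Finset γ) : ∑ x ∈ s, omegaC p ^ (f x).val = 0 ↔ BalancedOn f s := by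
  rw [sum_comp_eq_sum_card_filter_smul f s fun t => omegaC p ^ t.val]
  simp_rw [← Nat.cast_smul_eq_nsmul ℚ, (omegaC_isPrimitiveRoot p).sum_smul_pow_val_eq_zero_iff,
    Nat.cast_inj, BalancedOn]

theorem X_pow_sub_one_dvd_assocPoly_iff [NeZero p] (hmn : m ≤ n)
    (g : (Fin n → ZMod p) → ZMod p) :
    X ^ (p ^ m) - 1 ∣ assocPoly g ↔
      ∀ a, ∑ x ∈ cylinder (univ.map (Fin.castLEEmb hmn)) a, omegaC p ^ (g x).val = 0 := by
  rw [assocPoly, X_pow_sub_one_dvd_sum_monomial_iff (pow_ne_zero m (NeZero.ne p))]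
  constructor
  · intro h a
    simpa only [filter_idx_mod_pow_eq hmn] using h (idx a % p ^ m)
  · intro h r
    rcases (univ.filter fun x : Fin n → ZMod p => idx x % p ^ m = r).eq_empty_or_nonempty with
      hr | ⟨a, ha⟩
    · rw [hr, sum_empty]
    · rw [← (mem_filter.1 ha).2]
      simpa only [filter_idx_mod_pow_eq hmn] using h a

theorem X_pow_sub_one_dvd_assocPoly_comp_perm_iff [Fact p.Prime] (hmn : m ≤ n)
    (f : (Fin n → ZMod p) → ZMod p) (π : Equiv.Perm (Fin n)) :
    X ^ (p ^ m) - 1 ∣ assocPoly (fun x => f (x ∘ π)) ↔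
      ∀ a, BalancedOn f (cylinder ((univ.map (Fin.castLEEmb hmn)).map π.symm.toEmbedding) a) := by
  rw [X_pow_sub_one_dvd_assocPoly_iff hmn]
  simp_rw [sum_cylinder_comp_perm _ _ π (fun y => omegaC p ^ (f y).val),
    sum_omegaC_pow_val_eq_zero_iff]
  have hsurj : Function.Surjective fun a : Fin n → ZMod p => a ∘ π :=
    fun a => ⟨a ∘ π.symm, by ext; simp⟩
  exact (hsurj.forall (p := fun a => BalancedOn f (cylinder _ a))).symm

end AssocPoly

section Resilience

variable {p n m : ℕ} [NeZero p]

lemma corrImmune_iff (f : (Fin n → ZMod p) → ZMod p) :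
    CorrImmune f m ↔ ∀ S : Finset (Fin n), #S = m → ∀ a t,
      p ^ m * #{x ∈ cylinder S a | f x = t} = #{x | f x = t} := by
  simp only [CorrImmune, cylinder, filter_filter, and_comm (a := ∀ i ∈ _, _)]

lemma Resilient.balancedOn_cylinder {f : (Fin n → ZMod p) → ZMod p} (hf : Resilient f m)
    {S : Finset (Fin n)} (hS : #S = m) (a : Fin n → ZMod p) : BalancedOn f (cylinder S a) := by
  obtain ⟨hci, hbal⟩ := hf
  intro t t'
  apply mul_left_cancel₀ (pow_ne_zero m (NeZero.ne p))
  rw [(corrImmune_iff f).1 hci S hS a t, (corrImmune_iff f).1 hci S hS a t', hbal, hbal]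

lemma resilient_of_forall_balancedOn_cylinder (hp : 1 < p) (hmn : m ≤ n)
    {f : (Fin n → ZMod p) → ZMod p}
    (h : ∀ S : Finset (Fin n), #S = m → ∀ a, BalancedOn f (cylinder S a)) : Resilient f m := by
  have hp0 : p ≠ 0 := NeZero.ne p
  have hcylinder : ∀ S : Finset (Fin n), #S = m → ∀ a t,
      p * #{x ∈ cylinder S a | f x = t} = p ^ (n - m) := by
    intro S hS a t
    simpa [card_cylinder, hS] using (h S hS a).card_mul_card_filter t
  have hfiber : ∀ t, p * #{x | f x = t} = p ^ n := by
    intro t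
    obtain ⟨S, -, hS⟩ := exists_subset_card_eq (s := (univ : Finset (Fin n))) (by simpa using hmn)
    apply Nat.eq_of_mul_eq_mul_right (pow_pos (Nat.pos_of_ne_zero hp0) (n - m))
    calc p * #{x | f x = t} * p ^ (n - m) = ∑ a, p * #{x ∈ cylinder S a | f x = t} := by
          rw [← mul_sum, sum_card_filter_cylinder]
          simp [hS, mul_assoc]
      _ = p ^ n * p ^ (n - m) := by simp [hcylinder S hS]
  refine ⟨(corrImmune_iff f).2 fun S hS a t => mul_left_cancel₀ hp0 ?_, fun t => ?_⟩
  · calc p * (p ^ m * #{x ∈ cylinder S a | f x = t})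
        = p ^ m * (p * #{x ∈ cylinder S a | f x = t}) := by ring
      _ = p * #{x | f x = t} := by rw [hcylinder S hS a t, ← pow_add, Nat.add_sub_cancel' hmn, hfiber]
  · obtain _ | n := n
    · exact (hp.ne' (Nat.eq_one_of_mul_eq_one_right (by simpa using hfiber t))).elim
    · exact mul_left_cancel₀ hp0 (by rw [hfiber t, pow_succ']; rfl)

theorem resilient_iff_forall_balancedOn_cylinder (hp : 1 < p) (hmn : m ≤ n)
    (f : (Fin n → ZMod p) → ZMod p) :
    Resilient f m ↔ ∀ S : Finset (Fin n), #S = m → ∀ a, BalancedOn f (cylinder S a) :=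
  ⟨fun hf _ hS => hf.balancedOn_cylinder hS, resilient_of_forall_balancedOn_cylinder hp hmn⟩

end Resilience

theorem resilient_iff_pow_sub_one_dvd_assocPoly_general
    (p n m : ℕ) [Fact p.Prime] (hmn : m ≤ n)
    (f : (Fin n → ZMod p) → ZMod p) :
    Resilient f m ↔ ∀ π : Equiv.Perm (Fin n),
      (Polynomial.X ^ (p ^ m) - 1 : Polynomial ℂ) ∣ assocPoly (fun x => f (x ∘ π)) := by
  simp_rw [resilient_iff_forall_balancedOn_cylinder (Fact.out : p.Prime).one_lt hmn,
    X_pow_sub_one_dvd_assocPoly_comp_perm_iff hmn]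
  constructor
  · intro h π
    exact h _ (by simp)
  · intro h S hS
    obtain ⟨σ, hσ⟩ :=
      Equiv.Perm.exists_map_finset_eq (univ.map (Fin.castLEEmb hmn)) S (by simp [hS])
    simpa [hσ] using h σ.symm

/-- A function `f : 𝔽ₚⁿ → 𝔽ₚ` is `m`-resilient iff `z^{p^m} - 1` divides the
associated polynomial `F_π(z)` in `ℂ[z]` for every permutation `π`. -/
theorem resilient_iff_pow_sub_one_dvd_assocPoly
    (p n m : ℕ) [Fact p.Prime] (hn : 0 < n) (hm : 1 ≤ m) (hmn : m ≤ n)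
    (f : (Fin n → ZMod p) → ZMod p) :
    Resilient f m ↔ ∀ π : Equiv.Perm (Fin n),
      (Polynomial.X ^ (p ^ m) - 1 : Polynomial ℂ) ∣ assocPoly (fun x => f (x ∘ π)) :=
  resilient_iff_pow_sub_one_dvd_assocPoly_general p n m hmn f
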